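/- arXiv:2405.11925 — 5 statements merged into one kernel-verified Lean document; each statement's English description precedes it below -/
import Mathlib

section
/- Let n ≥ 2 and 1 ≤ p ≤ n. The function F(λ) = (M_p^n(λ))^{1/C(n,p)} is concave on the convex cone 𝒫_p: for all λ, μ ∈ 𝒫_p and all t ∈ [0,1], F(tλ + (1−t)μ) ≥ t F(λ) + (1−t) F(μ). -/
open Finset

/-- The cone `𝒫_p ⊆ ℝ^n`: every sum of `p` pairwise distinct components is positive. -/
def Pcone (n p : ℕ) : Set (Fin n → ℝ) :=
  {lam | ∀ S : Finset (Fin n), S.card = p → 0 < ∑ i ∈ S, lam i}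

/-- `M_p^n(λ) = ∏_{|S| = p} ∑_{i ∈ S} λ_i`. -/
def Mpn (n p : ℕ) (lam : Fin n → ℝ) : ℝ :=
  ∏ S ∈ Finset.univ.powersetCard p, ∑ i ∈ S, lam i

/-- `F(λ) = (M_p^n(λ))^{1/C(n,p)}`. -/
noncomputable def Fpn (n p : ℕ) (lam : Fin n → ℝ) : ℝ :=
  Mpn n p lam ^ ((n.choose p : ℝ)⁻¹)

/-- `F_i(λ) = ∂F/∂λ_i (λ)`. -/
noncomputable def Fi (n p : ℕ) (lam : Fin n → ℝ) (i : Fin n) : ℝ :=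
  fderiv ℝ (Fpn n p) lam (Pi.single i 1)

/-- Superadditivity of the (equal-weight) geometric mean. -/
lemma geom_mean_superadd {ι : Type*} (s : Finset ι) (hs : s.Nonempty)
    (a b : ι → ℝ) (ha : ∀ i ∈ s, 0 < a i) (hb : ∀ i ∈ s, 0 < b i) :
    (∏ i ∈ s, a i ^ ((s.card : ℝ)⁻¹)) + (∏ i ∈ s, b i ^ ((s.card : ℝ)⁻¹)) ≤
      ∏ i ∈ s, (a i + b i) ^ ((s.card : ℝ)⁻¹) := by
  have hcard : (0 : ℝ) < s.card := by exact_mod_cast hs.card_pos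
  set w : ι → ℝ := fun _ => (s.card : ℝ)⁻¹ with hw
  have hw0 : ∀ i ∈ s, 0 ≤ w i := fun i _ => by positivity
  have hw1 : ∑ i ∈ s, w i = 1 := by
    simp [hw, Finset.sum_const, hcard.ne']
  have hc : ∀ i ∈ s, 0 < a i + b i := fun i hi => add_pos (ha i hi) (hb i hi)
  have key : ∀ (x : ι → ℝ), (∀ i ∈ s, 0 < x i) →
      (∏ i ∈ s, x i ^ w i) ≤ (∑ i ∈ s, w i * (x i / (a i + b i))) * ∏ i ∈ s, (a i + b i) ^ w i := by
    intro x hx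
    have h1 : ∏ i ∈ s, (x i / (a i + b i)) ^ w i ≤ ∑ i ∈ s, w i * (x i / (a i + b i)) :=
      Real.geom_mean_le_arith_mean_weighted s w _ hw0 hw1
        (fun i hi => le_of_lt (div_pos (hx i hi) (hc i hi)))
    have h2 : ∏ i ∈ s, x i ^ w i =
        (∏ i ∈ s, (x i / (a i + b i)) ^ w i) * ∏ i ∈ s, (a i + b i) ^ w i := by
      rw [← Finset.prod_mul_distrib]
      refine Finset.prod_congr rfl fun i hi => ?_
      rw [← Real.mul_rpow (div_pos (hx i hi) (hc i hi)).le (hc i hi).le, div_mul_cancel₀ _ (hc i hi).ne']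
    rw [h2]
    exact mul_le_mul_of_nonneg_right h1 (Finset.prod_nonneg fun i hi => Real.rpow_nonneg (hc i hi).le _)
  have hA := key a ha
  have hB := key b hb
  calc (∏ i ∈ s, a i ^ w i) + (∏ i ∈ s, b i ^ w i)
      ≤ ((∑ i ∈ s, w i * (a i / (a i + b i))) + (∑ i ∈ s, w i * (b i / (a i + b i)))) *
          ∏ i ∈ s, (a i + b i) ^ w i := by rw [add_mul]; exact add_le_add hA hB
    _ = ∏ i ∈ s, (a i + b i) ^ w i := by
        rw [← Finset.sum_add_distrib]
        have : ∀ i ∈ s, w i * (a i / (a i + b i)) + w i * (b i / (a i + b i)) = w i := by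
          intro i hi
          rw [← mul_add, ← add_div, div_self (hc i hi).ne', mul_one]
        rw [Finset.sum_congr rfl this, hw1, one_mul]

/-- `F(λ) = (M_p^n(λ))^(1/C(n,p))` is concave on the convex cone `𝒫_p`. -/
theorem Fpn_concave_on_Pcone (n p : ℕ) (hn : 2 ≤ n) (hp1 : 1 ≤ p) (hpn : p ≤ n) :
    ∀ lam ∈ Pcone n p, ∀ mu ∈ Pcone n p, ∀ t : ℝ, 0 ≤ t → t ≤ 1 →
      t * Fpn n p lam + (1 - t) * Fpn n p mu ≤ Fpn n p (t • lam + (1 - t) • mu) := by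
  intro lam hlam mu hmu t ht0 ht1
  set s := Finset.univ.powersetCard p (α := Fin n) with hsdef
  have hscard : s.card = n.choose p := by
    rw [hsdef, Finset.card_powersetCard, Finset.card_univ, Fintype.card_fin]
  have hsne : s.Nonempty := Finset.powersetCard_nonempty.2 (by simpa using hpn)
  have hNpos : (0 : ℝ) < (n.choose p : ℝ) := by
    exact_mod_cast Nat.choose_pos hpn
  have hmem : ∀ S ∈ s, S.card = p := fun S hS => (Finset.mem_powersetCard.1 hS).2
  -- Fpn as a product of rpows
  have Fprod : ∀ x : Fin n → ℝ, x ∈ Pcone n p →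
      Fpn n p x = ∏ S ∈ s, (∑ i ∈ S, x i) ^ ((s.card : ℝ)⁻¹) := by
    intro x hx
    rw [Fpn, Mpn, ← hsdef, ← hscard]
    rw [← Real.finset_prod_rpow s _ (fun S hS => (hx S (hmem S hS)).le)]
  rcases eq_or_lt_of_le ht0 with h0 | h0
  · subst h0; simp
  rcases eq_or_lt_of_le ht1 with h1 | h1
  · subst h1; simp
  -- t ∈ (0,1)
  have h1t : 0 < 1 - t := by linarith
  have hcomb : (t • lam + (1 - t) • mu) ∈ Pcone n p := by
    intro S hS
    have := hlam S hS
    have := hmu S hS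
    simp only [Pi.add_apply, Pi.smul_apply, smul_eq_mul, Finset.sum_add_distrib,
      ← Finset.mul_sum]
    nlinarith
  rw [Fprod lam hlam, Fprod mu hmu, Fprod _ hcomb]
  have key := geom_mean_superadd s hsne (fun S => t * ∑ i ∈ S, lam i)
    (fun S => (1 - t) * ∑ i ∈ S, mu i)
    (fun S hS => mul_pos h0 (hlam S (hmem S hS)))
    (fun S hS => mul_pos h1t (hmu S (hmem S hS)))
  have hcard1 : (s.card : ℝ) * (s.card : ℝ)⁻¹ = 1 := by
    rw [hscard]; field_simp
  have hprodt : ∀ (c : ℝ), 0 < c → ∀ (f : Finset (Fin n) → ℝ), (∀ S ∈ s, 0 < f S) →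
      (∏ S ∈ s, (c * f S) ^ ((s.card : ℝ)⁻¹)) = c * ∏ S ∈ s, f S ^ ((s.card : ℝ)⁻¹) := by
    intro c hc f hf
    have : ∀ S ∈ s, (c * f S) ^ ((s.card : ℝ)⁻¹) =
        c ^ ((s.card : ℝ)⁻¹) * f S ^ ((s.card : ℝ)⁻¹) := fun S hS =>
      Real.mul_rpow hc.le (hf S hS).le
    rw [Finset.prod_congr rfl this, Finset.prod_mul_distrib, Finset.prod_const,
      ← Real.rpow_natCast (c ^ ((s.card : ℝ)⁻¹)) s.card, ← Real.rpow_mul hc.le,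
      inv_mul_cancel₀ (by rw [hscard]; exact hNpos.ne'), Real.rpow_one]
  have hsum : ∀ S : Finset (Fin n),
      (∑ i ∈ S, (t • lam + (1 - t) • mu) i) = t * ∑ i ∈ S, lam i + (1 - t) * ∑ i ∈ S, mu i := by
    intro S
    simp [Finset.sum_add_distrib, Finset.mul_sum]
  calc t * ∏ S ∈ s, (∑ i ∈ S, lam i) ^ ((s.card : ℝ)⁻¹) +
        (1 - t) * ∏ S ∈ s, (∑ i ∈ S, mu i) ^ ((s.card : ℝ)⁻¹)
      = (∏ S ∈ s, (t * ∑ i ∈ S, lam i) ^ ((s.card : ℝ)⁻¹)) +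
        (∏ S ∈ s, ((1 - t) * ∑ i ∈ S, mu i) ^ ((s.card : ℝ)⁻¹)) := by
        rw [hprodt t h0 _ (fun S hS => hlam S (hmem S hS)),
          hprodt (1 - t) h1t _ (fun S hS => hmu S (hmem S hS))]
    _ ≤ ∏ S ∈ s, (t * ∑ i ∈ S, lam i + (1 - t) * ∑ i ∈ S, mu i) ^ ((s.card : ℝ)⁻¹) := key
    _ = ∏ S ∈ s, (∑ i ∈ S, (t • lam + (1 - t) • mu) i) ^ ((s.card : ℝ)⁻¹) := by
        exact Finset.prod_congr rfl fun S _ => by rw [hsum]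
end

section
/- Let n ≥ 2 and 1 ≤ p ≤ n. Then F(1,…,1) = p, and for every λ ∈ 𝒫_p one has ∑_{i=1}^n F_i(λ) ≥ F(1,…,1) = p. -/
open Finset

/-!
Write `σ_S = ∑_{i ∈ S} λ_i` and `N = C(n, p)`, so that `F = (∏_S σ_S)^{1/N}` is the geometric mean
of the `σ_S`. Each `σ_S` grows at rate `|S| = p` along `(1, …, 1)`, so logarithmic differentiation
gives `∑_i F_i(λ) = p · F(λ) · (1/N) ∑_S σ_S⁻¹`. This is at least `p` by AM–GM applied to the
`σ_S⁻¹`, whose geometric mean is `F(λ)⁻¹`.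
-/

theorem Real.one_le_geom_mean_mul_arith_mean_inv {ι : Type*} {s : Finset ι} (hs : s.Nonempty)
    {x : ι → ℝ} (hx : ∀ i ∈ s, 0 < x i) :
    1 ≤ (∏ i ∈ s, x i) ^ (#s : ℝ)⁻¹ * ((#s : ℝ)⁻¹ * ∑ i ∈ s, (x i)⁻¹) := by
  set w : ℝ := (#s : ℝ)⁻¹
  have hx_inv : ∀ i ∈ s, 0 ≤ (x i)⁻¹ := fun i hi => (inv_pos.2 (hx i hi)).le
  have hgeom : 0 < (∏ i ∈ s, x i) ^ w := Real.rpow_pos_of_pos (prod_pos hx) w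
  have amgm : ((∏ i ∈ s, x i) ^ w)⁻¹ ≤ w * ∑ i ∈ s, (x i)⁻¹ := by
    have h := Real.geom_mean_le_arith_mean_weighted s (fun _ => w) (fun i => (x i)⁻¹)
      (fun _ _ => by positivity) (by simp [w, hs.card_ne_zero]) hx_inv
    rwa [Real.finsetProd_rpow _ _ hx_inv, prod_inv_distrib, Real.inv_rpow (prod_pos hx).le,
      ← mul_sum] at h
  calc 1 = (∏ i ∈ s, x i) ^ w * ((∏ i ∈ s, x i) ^ w)⁻¹ := (mul_inv_cancel₀ hgeom.ne').symm
    _ ≤ _ := by gcongr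

theorem fderiv_finsetProd_rpow_apply {ι E : Type*} [NormedAddCommGroup E] [NormedSpace ℝ E]
    {u : Finset ι} {g : ι → E → ℝ} {g' : ι → E →L[ℝ] ℝ} {x : E}
    (hg : ∀ i ∈ u, HasFDerivAt (g i) (g' i) x) (hpos : ∀ i ∈ u, 0 < g i x) (c : ℝ) (v : E) :
    fderiv ℝ (fun y => (∏ i ∈ u, g i y) ^ c) x v =
      c * (∏ i ∈ u, g i x) ^ c * ∑ i ∈ u, g' i v / g i x := by
  classical
  have hP : 0 < ∏ i ∈ u, g i x := prod_pos hpos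
  rw [((HasFDerivAt.finsetProd hg).rpow_const (Or.inl hP.ne')).fderiv]
  simp only [FunLike.coe_smul, FunLike.coe_sum, Pi.smul_apply, Finset.sum_apply, smul_eq_mul]
  rw [Real.rpow_sub_one hP.ne', mul_sum, mul_sum]
  refine sum_congr rfl fun i hi => ?_
  have hgi := (hpos i hi).ne'
  have hrest : ∏ j ∈ u.erase i, g j x ≠ 0 :=
    prod_ne_zero_iff.2 fun j hj => (hpos j (mem_of_mem_erase hj)).ne'
  rw [← mul_prod_erase u (g · x) hi]
  field_simp

theorem sum_pos_of_mem_Pcone {n p : ℕ} {lam : Fin n → ℝ} (hlam : lam ∈ Pcone n p)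
    {S : Finset (Fin n)} (hS : S ∈ univ.powersetCard p) : 0 < ∑ i ∈ S, lam i :=
  hlam S (mem_powersetCard.1 hS).2

theorem Fpn_const {n p : ℕ} (hpn : p ≤ n) {a : ℝ} (ha : 0 ≤ a) :
    Fpn n p (fun _ => a) = p * a := by
  have hM : Mpn n p (fun _ => a) = (p * a) ^ n.choose p := by
    rw [Mpn, prod_congr rfl fun S hS => ?_, prod_const, card_powersetCard, card_univ,
      Fintype.card_fin]
    simp [(mem_powersetCard.1 hS).2]
  rw [Fpn, hM, Real.pow_rpow_inv_natCast (by positivity) (Nat.choose_pos hpn).ne']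

theorem sum_Fi_eq {n p : ℕ} {lam : Fin n → ℝ} (hlam : lam ∈ Pcone n p) :
    ∑ i, Fi n p lam i = p * (Fpn n p lam *
      ((n.choose p : ℝ)⁻¹ * ∑ S ∈ univ.powersetCard p, (∑ i ∈ S, lam i)⁻¹)) := by
  have hlin : ∀ S ∈ univ.powersetCard p, HasFDerivAt (fun y : Fin n → ℝ => ∑ i ∈ S, y i)
      (∑ i ∈ S, ContinuousLinearMap.proj (R := ℝ) (φ := fun _ : Fin n => ℝ) i) lam :=
    fun S _ => HasFDerivAt.fun_sum fun i _ => hasFDerivAt_apply i lam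
  calc ∑ i, Fi n p lam i = fderiv ℝ (Fpn n p) lam (fun _ => 1) := by
        simp only [Fi, ← map_sum, univ_sum_single]
    _ = _ := fderiv_finsetProd_rpow_apply hlin (fun S hS => sum_pos_of_mem_Pcone hlam hS) _ _
    _ = _ := by
        rw [Fpn, Mpn, mul_sum, mul_sum, mul_sum, mul_sum]
        refine sum_congr rfl fun S hS => ?_
        simp only [FunLike.coe_sum, Finset.sum_apply, ContinuousLinearMap.proj_apply, sum_const,
          (mem_powersetCard.1 hS).2, nsmul_eq_mul, mul_one]
        ring

theorem sum_Fi_ge_p_general (n p : ℕ) (hpn : p ≤ n) :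
    Fpn n p (fun _ : Fin n => (1 : ℝ)) = p ∧
    ∀ lam ∈ Pcone n p, (p : ℝ) ≤ ∑ i, Fi n p lam i := by
  refine ⟨by simpa using Fpn_const hpn zero_le_one, fun lam hlam => ?_⟩
  have hne : (univ.powersetCard p : Finset (Finset (Fin n))).Nonempty :=
    powersetCard_nonempty.2 (by simpa using hpn)
  have amgm :=
    Real.one_le_geom_mean_mul_arith_mean_inv hne fun S hS => sum_pos_of_mem_Pcone hlam hS
  rw [card_powersetCard, card_univ, Fintype.card_fin] at amgm
  rw [sum_Fi_eq hlam]
  exact le_mul_of_one_le_right p.cast_nonneg amgm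

/-- `F(1,…,1) = p`, and for every `λ ∈ 𝒫_p` the sum of the partial
derivatives of `F` at `λ` is at least `F(1,…,1) = p`. -/
theorem sum_Fi_ge_p (n p : ℕ) (hn : 2 ≤ n) (hp1 : 1 ≤ p) (hpn : p ≤ n) :
    Fpn n p (fun _ : Fin n => (1 : ℝ)) = p ∧
    ∀ lam ∈ Pcone n p, (p : ℝ) ≤ ∑ i, Fi n p lam i :=
  sum_Fi_ge_p_general n p hpn
end

section
/- Let n ≥ 2 and 1 ≤ p ≤ n. For every λ ∈ 𝒫_p and all indices i, j with λ_i ≤ λ_j, one has F_i(λ) ≥ F_j(λ). Consequently, if λ_j = min_{1 ≤ i ≤ n} λ_i, then F_j(λ) ≥ (1/n) ∑_{i=1}^n F_i(λ). -/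
open Finset

/-! On `𝒫_p` the product rule gives `F_i = F / C(n,p) · ∑_{|S| = p, i ∈ S} (∑_{k ∈ S} λ_k)⁻¹`.
The transposition `(i j)` maps the `p`-sets containing `i` bijectively onto those containing `j`,
and when `λ_i ≤ λ_j` it does not decrease the sum of `λ` over a set containing `i`; comparing the
two sums of reciprocals term by term gives `F_j ≤ F_i`. The bound at a minimal index `j` follows by
comparing every `F_i` with `F_j`. -/

section Swap

variable {ι M : Type*} [DecidableEq ι]

theorem Finset.sum_le_sum_comp_swap [AddCommMonoid M] [PartialOrder M] [IsOrderedAddMonoid M]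
    {S : Finset ι} {f : ι → M} {i j : ι} (hi : i ∈ S) (hij : f i ≤ f j) :
    ∑ k ∈ S, f k ≤ ∑ k ∈ S, f (Equiv.swap i j k) := by
  by_cases hj : j ∈ S
  · refine (Equiv.Perm.sum_comp _ S f fun k hk => ?_).ge
    by_contra hkS
    exact hk (Equiv.swap_apply_of_ne_of_ne (ne_of_mem_of_not_mem hi hkS).symm
      (ne_of_mem_of_not_mem hj hkS).symm)
  · have hfix : ∀ k ∈ S.erase i, f (Equiv.swap i j k) = f k := fun k hk =>
      congrArg f (Equiv.swap_apply_of_ne_of_ne (ne_of_mem_erase hk)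
        (ne_of_mem_of_not_mem (mem_of_mem_erase hk) hj))
    rw [← add_sum_erase S _ hi, ← add_sum_erase S _ hi, sum_congr rfl hfix,
      Equiv.swap_apply_left]
    exact add_le_add_left hij _

variable [Fintype ι]

theorem Finset.sum_powersetCard_filter_mem_eq_swap [AddCommMonoid M] (p : ℕ) (i j : ι)
    (g : Finset ι → M) :
    ∑ S ∈ (univ.powersetCard p).filter (j ∈ ·), g S =
      ∑ S ∈ (univ.powersetCard p).filter (i ∈ ·), g (S.map (Equiv.swap i j).toEmbedding) := by
  refine (sum_equiv (Equiv.swap i j).finsetCongr (fun S => ?_) fun S _ => rfl).symm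
  simp [Equiv.finsetCongr_apply, Equiv.swap_apply_right]

theorem sum_inv_subsetSum_le_of_le {p : ℕ} {lam : ι → ℝ}
    (hpos : ∀ S : Finset ι, S.card = p → 0 < ∑ k ∈ S, lam k) {i j : ι} (hij : lam i ≤ lam j) :
    ∑ S ∈ (univ.powersetCard p).filter (j ∈ ·), (∑ k ∈ S, lam k)⁻¹ ≤
      ∑ S ∈ (univ.powersetCard p).filter (i ∈ ·), (∑ k ∈ S, lam k)⁻¹ := by
  rw [sum_powersetCard_filter_mem_eq_swap p i j]
  refine sum_le_sum fun S hS => ?_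
  obtain ⟨hSp, hiS⟩ := mem_filter.mp hS
  rw [sum_map]
  exact inv_anti₀ (hpos S (mem_powersetCard_univ.mp hSp)) (sum_le_sum_comp_swap hiS hij)

end Swap

theorem Mpn_pos {n p : ℕ} {lam : Fin n → ℝ} (hlam : lam ∈ Pcone n p) : 0 < Mpn n p lam :=
  prod_pos fun S hS => hlam S (mem_powersetCard_univ.mp hS)

theorem hasFDerivAt_Mpn {n p : ℕ} {lam : Fin n → ℝ} (hlam : lam ∈ Pcone n p) :
    HasFDerivAt (Mpn n p)
      (∑ S ∈ univ.powersetCard p,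
        (Mpn n p lam / ∑ k ∈ S, lam k) •
          (∑ k ∈ S, ContinuousLinearMap.proj k : (Fin n → ℝ) →L[ℝ] ℝ)) lam := by
  have hsum (S : Finset (Fin n)) : HasFDerivAt (fun x : Fin n → ℝ => ∑ k ∈ S, x k)
      (∑ k ∈ S, ContinuousLinearMap.proj k : (Fin n → ℝ) →L[ℝ] ℝ) lam :=
    HasFDerivAt.fun_sum fun k _ => hasFDerivAt_apply k lam
  have hprod := HasFDerivAt.finsetProd (u := univ.powersetCard p) fun S _ => hsum S
  refine hprod.congr_fderiv (sum_congr rfl fun S hS => ?_)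
  congr 1
  rw [eq_div_iff (hlam S (mem_powersetCard_univ.mp hS)).ne', Mpn, prod_erase_mul _ _ hS]

theorem Fi_eq_mul_sum_inv {n p : ℕ} {lam : Fin n → ℝ} (hlam : lam ∈ Pcone n p) (i : Fin n) :
    Fi n p lam i = (n.choose p : ℝ)⁻¹ * Fpn n p lam *
      ∑ S ∈ (univ.powersetCard p).filter (i ∈ ·), (∑ k ∈ S, lam k)⁻¹ := by
  have hM := Mpn_pos hlam
  have hF : HasFDerivAt (Fpn n p) _ lam := (hasFDerivAt_Mpn hlam).rpow_const (Or.inl hM.ne')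
  rw [Fi, hF.fderiv]
  simp only [smul_apply, FunLike.coe_sum, Finset.sum_apply, FunLike.coe_smul, Pi.smul_apply,
    ContinuousLinearMap.proj_apply, sum_pi_single', smul_eq_mul, mul_ite, mul_one, mul_zero,
    ← sum_filter, mul_sum, Fpn, Real.rpow_sub_one hM.ne']
  refine sum_congr rfl fun S _ => ?_
  field_simp

theorem Fi_antitone_and_min_index_bound_general (n p : ℕ) :
    ∀ lam ∈ Pcone n p,
      (∀ i j : Fin n, lam i ≤ lam j → Fi n p lam j ≤ Fi n p lam i) ∧
      (∀ j : Fin n, (∀ i : Fin n, lam j ≤ lam i) →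
        (1 / n : ℝ) * ∑ i, Fi n p lam i ≤ Fi n p lam j) := by
  intro lam hlam
  have hcoef : 0 ≤ (n.choose p : ℝ)⁻¹ * Fpn n p lam :=
    mul_nonneg (by positivity) (Real.rpow_nonneg (Mpn_pos hlam).le _)
  have hanti (i j : Fin n) (hij : lam i ≤ lam j) : Fi n p lam j ≤ Fi n p lam i := by
    rw [Fi_eq_mul_sum_inv hlam, Fi_eq_mul_sum_inv hlam]
    exact mul_le_mul_of_nonneg_left (sum_inv_subsetSum_le_of_le hlam hij) hcoef
  refine ⟨hanti, fun j hj => ?_⟩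
  have hsum : ∑ i, Fi n p lam i ≤ n * Fi n p lam j := by
    simpa using sum_le_card_nsmul univ (Fi n p lam) _ fun i _ => hanti j i (hj i)
  have hn : (0 : ℝ) < n := by exact_mod_cast j.pos
  rwa [one_div, inv_mul_le_iff₀ hn]

/-- On `𝒫_p`, if `λ_i ≤ λ_j` then `F_i(λ) ≥ F_j(λ)`; consequently, if
`λ_j` is the minimal component then `F_j(λ) ≥ (1/n) ∑_i F_i(λ)`. -/
theorem Fi_antitone_and_min_index_bound (n p : ℕ) (hn : 2 ≤ n) (hp1 : 1 ≤ p)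
    (hpn : p ≤ n) :
    ∀ lam ∈ Pcone n p,
      (∀ i j : Fin n, lam i ≤ lam j → Fi n p lam j ≤ Fi n p lam i) ∧
      (∀ j : Fin n, (∀ i : Fin n, lam j ≤ lam i) →
        (1 / n : ℝ) * ∑ i, Fi n p lam i ≤ Fi n p lam j) :=
  Fi_antitone_and_min_index_bound_general n p
end

section
/- Let n ≥ 2 and 1 ≤ p ≤ n−1, and let λ ∈ ℝ^n satisfy λ_1 ≤ λ_2 ≤ ⋯ ≤ λ_n and λ_1 + ⋯ + λ_p > 0. Then each factor λ_n + λ_{i1} + ⋯ + λ_{i_{p−1}} with 1 ≤ i1 < ⋯ < i_{p−1} ≤ n−1 is at least λ_1 + ⋯ + λ_p > 0, and M_p^n(λ) ≥ (λ_1 + ⋯ + λ_p)^{C(n,p) − C(n−1,p−1)} · ∏_{1 ≤ i1 < ⋯ < i_{p−1} ≤ n−1} (λ_n + λ_{i1} + ⋯ + λ_{i_{p−1}}), where C(a,b) = a!/(b!(a−b)!) and the product runs over all (p−1)-element subsets of {1,…,n−1}. -/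
/-! Split the `p`-subsets of `{1, …, n}` according to whether they contain `n`. Those that do are
`{n} ∪ T` with `T` a `(p-1)`-subset of `{1, …, n-1}` and give the second factor; there are
`C(n,p) - C(n-1,p-1) = C(n-1,p)` of the others, and since `λ` is sorted each of their sums is at
least the sum `λ_1 + ⋯ + λ_p` of the `p` smallest components. -/

open Finset

lemma Fin.val_le_val_of_strictMono {m n : ℕ} {f : Fin m → Fin n} (hf : StrictMono f) (i : Fin m) :
    (i : ℕ) ≤ f i := by
  have h := card_le_card_of_injOn f (s := Iio i) (t := Iio (f i))
    (fun j hj => mem_Iio.2 (hf (mem_Iio.1 hj))) hf.injective.injOn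
  simpa only [Fin.card_Iio] using h

lemma Monotone.sum_filter_val_lt_le_sum {α : Type*} [AddCommMonoid α] [PartialOrder α]
    [IsOrderedAddMonoid α] {n p : ℕ} {f : Fin n → α} (hf : Monotone f) {S : Finset (Fin n)}
    (hS : #S = p) : ∑ i ∈ univ.filter (fun i : Fin n => (i : ℕ) < p), f i ≤ ∑ i ∈ S, f i := by
  have hp : p ≤ n := hS ▸ (card_le_univ S).trans_eq (Fintype.card_fin n)
  have hinit : univ.filter (fun i : Fin n => (i : ℕ) < p) = univ.map (Fin.castLEEmb hp) := by
    ext i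
    simp only [mem_filter, mem_univ, true_and, mem_map, Fin.castLEEmb_apply]
    exact ⟨fun h => ⟨⟨i, h⟩, rfl⟩, by rintro ⟨k, rfl⟩; exact k.isLt⟩
  rw [hinit, sum_map, ← image_orderEmbOfFin_univ S hS,
    sum_image (S.orderEmbOfFin hS).injective.injOn]
  exact sum_le_sum fun k _ => hf (Fin.val_le_val_of_strictMono (S.orderEmbOfFin hS).strictMono k)

lemma Finset.prod_powersetCard_succ_insert {α β : Type*} [DecidableEq α] [CommMonoid β]
    {a : α} {s : Finset α} (ha : a ∉ s) (k : ℕ) (f : Finset α → β) :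
    ∏ t ∈ (insert a s).powersetCard (k + 1), f t =
      (∏ t ∈ s.powersetCard (k + 1), f t) * ∏ t ∈ s.powersetCard k, f (insert a t) := by
  rw [powersetCard_succ_insert ha, prod_union, prod_image]
  · exact insert_erase_invOn.2.injOn.mono fun t ht ↦ notMem_mono (mem_powersetCard.1 ht).1 ha
  · aesop (add simp [disjoint_left, insert_subset_iff, mem_powersetCard])

lemma Fin.filter_val_lt_sub_one_eq_erase {n : ℕ} (h : n - 1 < n) :
    univ.filter (fun i : Fin n => (i : ℕ) < n - 1) = univ.erase ⟨n - 1, h⟩ := by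
  ext i
  simp only [mem_filter, mem_univ, true_and, mem_erase, and_true, ne_eq, Fin.ext_iff]
  omega

lemma Mpn_succ_eq_mul {n : ℕ} (q : ℕ) (lam : Fin n → ℝ) (m : Fin n) :
    Mpn n (q + 1) lam = (∏ S ∈ (univ.erase m).powersetCard (q + 1), ∑ i ∈ S, lam i) *
      ∏ T ∈ (univ.erase m).powersetCard q, (lam m + ∑ j ∈ T, lam j) := by
  conv_lhs => rw [Mpn, ← insert_erase (mem_univ m)]
  rw [prod_powersetCard_succ_insert (notMem_erase m univ)]
  congr 1
  refine prod_congr rfl fun T hT => sum_insert fun hm => ?_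
  exact notMem_erase m univ ((mem_powersetCard.1 hT).1 hm)

/-- For sorted `λ` with positive sum of the first `p` components and
`1 ≤ p ≤ n - 1`, each factor `λ_n + λ_{i_1} + ⋯ + λ_{i_{p-1}}` over `(p-1)`-subsets of the
first `n - 1` indices is at least `λ_1 + ⋯ + λ_p`, and `M_p^n(λ)` is bounded below by the
product of these factors times `(λ_1 + ⋯ + λ_p)^(C(n,p) - C(n-1,p-1))`. -/
theorem Mpn_factorization_lower_bound (n p : ℕ) (hn : 2 ≤ n) (hp1 : 1 ≤ p)
    (lam : Fin n → ℝ) (hsorted : Monotone lam)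
    (hpos : 0 < ∑ i ∈ Finset.univ.filter (fun i : Fin n => (i : ℕ) < p), lam i) :
    (∀ T ∈ (Finset.univ.filter (fun i : Fin n => (i : ℕ) < n - 1)).powersetCard (p - 1),
      ∑ i ∈ Finset.univ.filter (fun i : Fin n => (i : ℕ) < p), lam i ≤
        lam ⟨n - 1, by omega⟩ + ∑ j ∈ T, lam j) ∧
    (∑ i ∈ Finset.univ.filter (fun i : Fin n => (i : ℕ) < p), lam i) ^
        (n.choose p - (n - 1).choose (p - 1)) *
      ∏ T ∈ (Finset.univ.filter (fun i : Fin n => (i : ℕ) < n - 1)).powersetCard (p - 1),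
        (lam ⟨n - 1, by omega⟩ + ∑ j ∈ T, lam j) ≤ Mpn n p lam := by
  obtain ⟨q, rfl⟩ : ∃ q, p = q + 1 := ⟨p - 1, by omega⟩
  set m : Fin n := ⟨n - 1, by omega⟩
  set s := ∑ i ∈ univ.filter (fun i : Fin n => (i : ℕ) < q + 1), lam i
  have hfactor_ge : ∀ T ∈ (univ.erase m).powersetCard q, s ≤ lam m + ∑ j ∈ T, lam j := by
    intro T hT
    have hmT : m ∉ T := fun hm => notMem_erase m univ ((mem_powersetCard.1 hT).1 hm)
    rw [← sum_insert hmT]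
    exact hsorted.sum_filter_val_lt_le_sum <| by
      rw [card_insert_of_notMem hmT, (mem_powersetCard.1 hT).2]
  have hrest : s ^ (n - 1).choose (q + 1) ≤
      ∏ S ∈ (univ.erase m).powersetCard (q + 1), ∑ i ∈ S, lam i := by
    have hcard : #(univ.erase m) = n - 1 := by simp
    rw [← hcard, ← card_powersetCard, ← prod_const]
    exact prod_le_prod (fun _ _ => hpos.le)
      fun S hS => hsorted.sum_filter_val_lt_le_sum (mem_powersetCard.1 hS).2
  have hpascal : n.choose (q + 1) - (n - 1).choose q = (n - 1).choose (q + 1) := by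
    obtain ⟨k, rfl⟩ : ∃ k, n = k + 1 := ⟨n - 1, by omega⟩
    simp [Nat.choose_succ_succ']
  rw [Fin.filter_val_lt_sub_one_eq_erase, Nat.add_sub_cancel]
  refine ⟨hfactor_ge, ?_⟩
  rw [Mpn_succ_eq_mul q lam m, hpascal]
  exact mul_le_mul_of_nonneg_right hrest (prod_nonneg fun T hT => hpos.le.trans (hfactor_ge T hT))
end

section
/- Let n ≥ 2 and 1 ≤ p ≤ n. The set P_p of real symmetric n×n matrices A whose eigenvalue vector λ(A) lies in 𝒫_p is an open convex cone in the space of real symmetric n×n matrices, and the function A ↦ F(λ(A)) = (∏_{1 ≤ i1 < ⋯ < ip ≤ n} (λ_{i1}(A) + ⋯ + λ_{ip}(A)))^{1/C(n,p)} is concave on P_p. -/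
open Finset

/-- The cone of real symmetric matrices whose eigenvalue vector lies in `𝒫_p`. -/
def PconeMat (n p : ℕ) : Set (Matrix (Fin n) (Fin n) ℝ) :=
  {A | ∃ hA : A.IsHermitian, hA.eigenvalues ∈ Pcone n p}

/-- `A ↦ F(λ(A))`, extended by `0` off the symmetric matrices. -/
noncomputable def FpnMat (n p : ℕ) (A : Matrix (Fin n) (Fin n) ℝ) : ℝ :=
  if hA : A.IsHermitian then
    (∏ S ∈ Finset.univ.powersetCard p, ∑ i ∈ S, hA.eigenvalues i) ^ ((n.choose p : ℝ)⁻¹)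
  else 0

/-!
The `p`-th additive compound `D(A)` (the matrix of the derivation
`v₁ ∧ ⋯ ∧ v_p ↦ ∑ᵢ v₁ ∧ ⋯ ∧ A vᵢ ∧ ⋯ ∧ v_p` of `⋀^p ℝⁿ`) is linear in `A`. For a symmetric
`A = V diag(λ) Vᵀ` it equals `C(V) diag(λ_S) C(V)ᵀ`, where `C(V)` is the orthogonal `p`-th
compound matrix of `V` and `λ_S = ∑_{i ∈ S} λᵢ`. Hence `A ∈ P_p` iff `A` is symmetric and `D(A)`
is positive definite, and `F(λ(A)) = det (D(A)) ^ (1 / C(n,p))`. Openness and the cone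
properties follow from the linearity of `D`, and concavity from Minkowski's determinant
inequality `det X ^ (1/N) + det Y ^ (1/N) ≤ det (X + Y) ^ (1/N)` for positive definite `X, Y`.

`D(A)` is obtained as the `ε`-coefficient of `C(1 + ε A)` over the dual numbers, so that its
linearity and its behaviour under conjugation both follow from the multiplicativity of `C`, which
is the functoriality of `⋀^p`.
-/

open Matrix TrivSqZeroExt
open scoped DualNumber

theorem Real.geom_mean_add_geom_mean_le {κ : Type*} [Fintype κ] [Nonempty κ] {a b : κ → ℝ}
    (ha : ∀ i, 0 < a i) (hb : ∀ i, 0 < b i) :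
    (∏ i, a i) ^ (Fintype.card κ : ℝ)⁻¹ + (∏ i, b i) ^ (Fintype.card κ : ℝ)⁻¹ ≤
      (∏ i, (a i + b i)) ^ (Fintype.card κ : ℝ)⁻¹ := by
  set w : ℝ := (Fintype.card κ : ℝ)⁻¹
  have hw : ∑ _i : κ, w = 1 := by simp [w, Finset.card_univ]
  have hab i : 0 < a i + b i := add_pos (ha i) (hb i)
  have hG : 0 < ∏ i, (a i + b i) := Finset.prod_pos fun i _ => hab i
  -- AM-GM for the ratios `a / (a + b)` and `b / (a + b)`, whose arithmetic means add up to `1`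
  have amgm (c : κ → ℝ) (hc : ∀ i, 0 < c i) :
      (∏ i, c i) ^ w / (∏ i, (a i + b i)) ^ w ≤ ∑ i, w * (c i / (a i + b i)) := by
    have hcab i : 0 ≤ c i / (a i + b i) := (div_pos (hc i) (hab i)).le
    rw [← Real.div_rpow (Finset.prod_pos fun i _ => hc i).le hG.le,
      ← Finset.prod_div_distrib, ← Real.finsetProd_rpow _ _ fun i _ => hcab i]
    exact Real.geom_mean_le_arith_mean_weighted _ _ _ (fun _ _ => by positivity) hw
      fun i _ => hcab i
  have hsum : ∑ i, (w * (a i / (a i + b i)) + w * (b i / (a i + b i))) = 1 := by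
    simp_rw [← mul_add, ← add_div, div_self (hab _).ne', mul_one]
    exact hw
  have key := add_le_add (amgm a ha) (amgm b hb)
  rwa [← add_div, ← Finset.sum_add_distrib, hsum, div_le_one (Real.rpow_pos_of_pos hG w)] at key

namespace Matrix

section DualNumber

variable {R : Type*} [CommRing R] {l m n : Type*}

theorem map_inr_mul_map_inr [Fintype m] (A : Matrix l m R) (B : Matrix m n R) :
    A.map (inr : R → R[ε]) * B.map (inr : R → R[ε]) = 0 := by
  refine Matrix.ext fun i j => ?_
  simp only [mul_apply, map_apply, inr_mul_inr, Finset.sum_const_zero, zero_apply]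

theorem map_inl_mul_map_inr [Fintype m] (A : Matrix l m R) (B : Matrix m n R) :
    A.map (inl : R → R[ε]) * B.map (inr : R → R[ε]) = (A * B).map inr := by
  refine Matrix.ext fun i j => ?_
  simp only [mul_apply, map_apply, inl_mul_inr, smul_eq_mul, inr_sum]

theorem map_inr_mul_map_inl [Fintype m] (A : Matrix l m R) (B : Matrix m n R) :
    A.map (inr : R → R[ε]) * B.map (inl : R → R[ε]) = (A * B).map inr := by
  refine Matrix.ext fun i j => ?_
  simp only [mul_apply, map_apply, inr_mul_inl, op_smul_eq_mul, inr_sum]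

theorem map_inl_mul_map_inl [Fintype m] (A : Matrix l m R) (B : Matrix m n R) :
    A.map (inl : R → R[ε]) * B.map (inl : R → R[ε]) = (A * B).map inl :=
  (Matrix.map_mul (f := inlHom R R)).symm

theorem prod_one_add_inr {κ : Type*} (s : Finset κ) (f : κ → R) :
    ∏ i ∈ s, (1 + inr (f i) : R[ε]) = 1 + inr (∑ i ∈ s, f i) := by
  classical
  induction s using Finset.induction_on with
  | empty => simp
  | insert a s ha ih =>
    rw [Finset.prod_insert ha, ih, Finset.sum_insert ha, inr_add, add_mul, mul_add, mul_add,
      inr_mul_inr]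
    simp only [one_mul, mul_one, add_zero]
    abel

variable [DecidableEq m]

theorem one_add_map_inr_mul_one_add_map_inr [Fintype m] (A B : Matrix m m R) :
    (1 + A.map (inr : R → R[ε])) * (1 + B.map (inr : R → R[ε])) = 1 + (A + B).map inr := by
  rw [add_mul, mul_add, mul_add, map_inr_mul_map_inr, Matrix.map_add _ (inr_add R)]
  simp only [mul_one, one_mul, add_zero]
  abel

theorem map_inl_mul_one_add_map_inr_mul_map_inl [Fintype m] (X Y Z : Matrix m m R) :
    X.map (inl : R → R[ε]) * (1 + Y.map inr) * Z.map inl =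
      (X * Z).map inl + (X * Y * Z).map inr := by
  rw [mul_add, mul_one, add_mul, map_inl_mul_map_inl, map_inl_mul_map_inr, map_inr_mul_map_inl]

theorem map_snd_one_add_map_inr (A : Matrix m m R) :
    (1 + A.map (inr : R → R[ε])).map snd = A := by
  ext i j
  by_cases h : i = j <;> simp [h]

theorem map_fst_one_add_map_inr (A : Matrix m m R) :
    (1 + A.map (inr : R → R[ε])).map fst = 1 := by
  ext i j
  by_cases h : i = j <;> simp [one_apply, h]

theorem eq_one_add_map_inr_map_snd {X : Matrix m m R[ε]} (hX : X.map fst = 1) :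
    X = 1 + (X.map snd).map inr := by
  refine Matrix.ext fun i j => TrivSqZeroExt.ext ?_ ?_
  · simpa [one_apply, apply_ite] using congrFun (congrFun hX i) j
  · simp [one_apply, apply_ite]

theorem map_one_add_map_inr_map (f : R →ₗ[R] R) (A : Matrix m m R) :
    (1 + A.map (inr : R → R[ε])).map (TrivSqZeroExt.map f) = 1 + (A.map f).map inr := by
  rw [Matrix.map_add _ (map_add _), Matrix.map_one _ (map_zero _) (map_one _), Matrix.map_map,
    Matrix.map_map]
  congr 2
  funext x
  exact TrivSqZeroExt.map_inr f x

end DualNumber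

section Compound

variable {R : Type*} [CommRing R] {ι : Type*} [Fintype ι] [LinearOrder ι] [DecidableEq ι] (p : ℕ)

noncomputable def compound (M : Matrix ι ι R) :
    Matrix (Set.powersetCard ι p) (Set.powersetCard ι p) R :=
  LinearMap.toMatrix ((Pi.basisFun R ι).exteriorPower p) ((Pi.basisFun R ι).exteriorPower p)
    (exteriorPower.map p (toLin' M))

theorem compound_mul (M N : Matrix ι ι R) :
    compound p (M * N) = compound p M * compound p N := by
  rw [compound, compound, compound, toLin'_mul, exteriorPower.map_comp]
  exact LinearMap.toMatrix_comp _ _ _ _ _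

theorem compound_one : compound p (1 : Matrix ι ι R) = 1 := by
  rw [compound, toLin'_one, exteriorPower.map_id, LinearMap.toMatrix_id]

theorem compound_apply (M : Matrix ι ι R) (s t : Set.powersetCard ι p) :
    compound p M s t = det (M.submatrix (Set.powersetCard.ofFinEmbEquiv.symm s)
      (Set.powersetCard.ofFinEmbEquiv.symm t)) := by
  rw [compound, LinearMap.toMatrix_apply, exteriorPower.basis_repr_apply,
    exteriorPower.basis_apply, exteriorPower.map_apply_ιMulti_family, exteriorPower.ιMulti_family,
    exteriorPower.ιMultiDual_apply_ιMulti, ← det_transpose]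
  congr 1
  ext i j
  simp

theorem compound_transpose (M : Matrix ι ι R) : compound p Mᵀ = (compound p M)ᵀ := by
  ext s t
  rw [compound_apply, transpose_apply, compound_apply, ← transpose_submatrix, det_transpose]

theorem compound_map {S : Type*} [CommRing S] (f : R →+* S) (M : Matrix ι ι R) :
    compound p (M.map f) = (compound p M).map f := by
  ext s t
  rw [compound_apply, map_apply, compound_apply, submatrix_map, RingHom.map_det,
    RingHom.mapMatrix_apply]

theorem compound_diagonal (d : ι → R) :
    compound p (diagonal d) =
      diagonal fun s : Set.powersetCard ι p => ∏ i ∈ (s : Finset ι), d i := by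
  ext s t
  rw [compound_apply]
  obtain rfl | hst := eq_or_ne s t
  · rw [diagonal_apply_eq,
      submatrix_diagonal _ _ (Set.powersetCard.ofFinEmbEquiv.symm s).injective, det_diagonal,
      ← Finset.map_orderEmbOfFin_univ s.val s.prop, Finset.prod_map]
    rfl
  · rw [diagonal_apply_ne _ hst]
    obtain ⟨i, his, hit⟩ := (Set.powersetCard.exists_mem_notMem_iff_ne s t).mp hst
    obtain ⟨k, rfl⟩ := (Set.powersetCard.mem_range_ofFinEmbEquiv_symm_iff_mem s i).mpr his
    refine det_eq_zero_of_row_eq_zero k fun j => diagonal_apply_ne _ fun h => hit ?_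
    rw [h]
    exact (Set.powersetCard.mem_range_ofFinEmbEquiv_symm_iff_mem t _).mp ⟨j, rfl⟩

theorem map_fst_compound_one_add_map_inr (A : Matrix ι ι R) :
    (compound p (1 + A.map (inr : R → R[ε]))).map fst = 1 := by
  rw [← compound_one p]
  exact (compound_map p (fstHom R R R).toRingHom _).symm.trans
    (congrArg (compound p) (map_fst_one_add_map_inr A))

noncomputable def addCompound :
    Matrix ι ι R →ₗ[R] Matrix (Set.powersetCard ι p) (Set.powersetCard ι p) R where
  toFun A := (compound p (1 + A.map (inr : R → R[ε]))).map snd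
  map_add' A B := by
    rw [← one_add_map_inr_mul_one_add_map_inr, compound_mul,
      eq_one_add_map_inr_map_snd (map_fst_compound_one_add_map_inr p A),
      eq_one_add_map_inr_map_snd (map_fst_compound_one_add_map_inr p B),
      one_add_map_inr_mul_one_add_map_inr, map_snd_one_add_map_inr, map_snd_one_add_map_inr,
      map_snd_one_add_map_inr]
  map_smul' c A := by
    -- scaling `A` by `c` is the dual-number automorphism `ε ↦ c ε` applied to `1 + ε A`
    have hc {κ : Type _} (M : Matrix κ κ R) :
        M.map (c • LinearMap.id : R →ₗ[R] R) = c • M := by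
      ext; simp
    rw [← hc, ← map_one_add_map_inr_map, ← AlgHom.coe_toRingHom, compound_map,
      eq_one_add_map_inr_map_snd (map_fst_compound_one_add_map_inr p A), AlgHom.coe_toRingHom,
      map_one_add_map_inr_map, map_snd_one_add_map_inr, map_snd_one_add_map_inr]
    exact hc _

theorem addCompound_apply (A : Matrix ι ι R) :
    addCompound p A = (compound p (1 + A.map (inr : R → R[ε]))).map snd :=
  rfl

theorem compound_one_add_map_inr (A : Matrix ι ι R) :
    compound p (1 + A.map (inr : R → R[ε])) = 1 + (addCompound p A).map inr :=
  eq_one_add_map_inr_map_snd (map_fst_compound_one_add_map_inr p A)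

theorem addCompound_transpose (A : Matrix ι ι R) :
    addCompound p Aᵀ = (addCompound p A)ᵀ := by
  rw [addCompound_apply, addCompound_apply, ← transpose_map, ← compound_transpose, transpose_add,
    transpose_one, ← transpose_map]

theorem addCompound_mul_mul {V W : Matrix ι ι R} (hVW : V * W = 1) (A : Matrix ι ι R) :
    addCompound p (V * A * W) = compound p V * addCompound p A * compound p W := by
  have hlift : 1 + (V * A * W).map (inr : R → R[ε]) =
      V.map inl * (1 + A.map inr) * W.map inl := by
    rw [map_inl_mul_one_add_map_inr_mul_map_inl, hVW, Matrix.map_one _ (inl_zero R) (inl_one R)]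
  have hinl (M : Matrix ι ι R) :
      compound p (M.map (inl : R → R[ε])) = (compound p M).map inl :=
    compound_map p (inlHom R R) M
  have hC : compound p V * compound p W = 1 := by rw [← compound_mul, hVW, compound_one]
  rw [addCompound_apply, hlift, compound_mul, compound_mul, hinl, hinl, compound_one_add_map_inr,
    map_inl_mul_one_add_map_inr_mul_map_inl, hC, Matrix.map_one _ (inl_zero R) (inl_one R),
    map_snd_one_add_map_inr]

theorem addCompound_diagonal (d : ι → R) :
    addCompound p (diagonal d) =
      diagonal fun s : Set.powersetCard ι p => ∑ i ∈ (s : Finset ι), d i := by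
  rw [addCompound_apply, diagonal_map (inr_zero R), ← diagonal_one, diagonal_add,
    compound_diagonal, diagonal_map snd_zero]
  simp only [prod_one_add_inr, snd_add, snd_one, snd_inr, zero_add]

end Compound

section PosDef

variable {κ : Type*} [Fintype κ] [DecidableEq κ]

theorem IsHermitian.det_one_add {Z : Matrix κ κ ℝ} (hZ : Z.IsHermitian) :
    det (1 + Z) = ∏ i, (1 + hZ.eigenvalues i) := by
  have h : 1 + Z = cfc (fun x : ℝ => 1 + x) Z := by
    rw [cfc_add .., cfc_const_one .., cfc_id' ..]
  rw [h, hZ.cfc_eq, IsHermitian.cfc, Unitary.conjStarAlgAut_apply, det_mul, det_mul, mul_comm,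
    ← mul_assoc, ← det_mul, Unitary.coe_star_mul_self, det_one, one_mul, det_diagonal]
  rfl

open scoped MatrixOrder in
theorem PosDef.det_rpow_add_det_rpow_le [Nonempty κ] {X Y : Matrix κ κ ℝ} (hX : X.PosDef)
    (hY : Y.PosDef) :
    det X ^ (Fintype.card κ : ℝ)⁻¹ + det Y ^ (Fintype.card κ : ℝ)⁻¹ ≤
      det (X + Y) ^ (Fintype.card κ : ℝ)⁻¹ := by
  -- writing `X = Bᴴ B` and `Y = Bᴴ Z B`, this is `1 + det Z ^ (1/N) ≤ det (1 + Z) ^ (1/N)`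
  obtain ⟨B, rfl⟩ := CStarAlgebra.nonneg_iff_eq_star_mul_self.mp hX.posSemidef.nonneg
  have hB : IsUnit B := isUnit_of_mul_isUnit_right hX.isUnit
  set Z := star B⁻¹ * Y * B⁻¹ with hZdef
  have hZ : Z.PosDef :=
    (isUnit_nonsing_inv_iff.mpr hB).posDef_star_left_conjugate_iff.mpr hY
  have hBB : B⁻¹ * B = 1 := nonsing_inv_mul B ((isUnit_iff_isUnit_det B).mp hB)
  have hY' : Y = star B * Z * B := by
    rw [hZdef, ← mul_assoc, ← mul_assoc, ← star_mul, hBB, star_one, one_mul, mul_assoc, hBB,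
      mul_one]
  have hXY : star B * B + Y = star B * (1 + Z) * B := by
    rw [hY', mul_add, add_mul, mul_one]
  have hdet (M : Matrix κ κ ℝ) : det (star B * M * B) = det (star B * B) * det M := by
    simp only [det_mul]; ring
  have hdetX : 0 < det (star B * B) := hX.det_pos
  rw [hXY, hdet, hY', hdet, Real.mul_rpow hdetX.le hZ.det_pos.le,
    Real.mul_rpow hdetX.le (PosDef.one.add hZ).det_pos.le, ← mul_one_add,
    hZ.isHermitian.det_one_add, hZ.isHermitian.det_eq_prod_eigenvalues]
  refine mul_le_mul_of_nonneg_left ?_ (by positivity)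
  simpa using Real.geom_mean_add_geom_mean_le (fun _ => one_pos) hZ.eigenvalues_pos

omit [Fintype κ] [DecidableEq κ] in
theorem convex_setOf_posDef : Convex ℝ {X : Matrix κ κ ℝ | X.PosDef} :=
  convex_iff_forall_pos.mpr fun _ hX _ hY _ _ ha hb _ => (hX.smul ha).add (hY.smul hb)

theorem concaveOn_det_rpow [Nonempty κ] :
    ConcaveOn ℝ {X : Matrix κ κ ℝ | X.PosDef} fun X => det X ^ (Fintype.card κ : ℝ)⁻¹ := by
  refine concaveOn_iff_forall_pos.mpr ⟨convex_setOf_posDef, fun X hX Y hY a b ha hb _ => ?_⟩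
  have hhom {c : ℝ} (hc : 0 < c) {M : Matrix κ κ ℝ} (hM : M.PosDef) :
      det (c • M) ^ (Fintype.card κ : ℝ)⁻¹ = c • det M ^ (Fintype.card κ : ℝ)⁻¹ := by
    rw [det_smul, Real.mul_rpow (by positivity) hM.det_pos.le,
      Real.pow_rpow_inv_natCast hc.le Fintype.card_ne_zero, smul_eq_mul]
  rw [← hhom ha hX, ← hhom hb hY]
  exact PosDef.det_rpow_add_det_rpow_le (hX.smul ha) (hY.smul hb)

omit [Fintype κ] [DecidableEq κ] in
theorem convex_setOf_isHermitian : Convex ℝ {A : Matrix κ κ ℝ | A.IsHermitian} :=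
  fun _ hA _ hB a b _ _ _ =>
    (hA.smul (IsSelfAdjoint.all a)).add (hB.smul (IsSelfAdjoint.all b))

omit [DecidableEq κ] in
theorem isOpen_setOf_forall_dotProduct_mulVec_pos :
    IsOpen {M : Matrix κ κ ℝ | ∀ x ≠ 0, 0 < star x ⬝ᵥ M *ᵥ x} := by
  have hsphere : {M : Matrix κ κ ℝ | ∀ x ≠ 0, 0 < star x ⬝ᵥ M *ᵥ x} =
      {M | ∀ x ∈ Metric.sphere (0 : κ → ℝ) 1, 0 < star x ⬝ᵥ M *ᵥ x} := by
    ext M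
    refine ⟨fun h x hx => h x (ne_zero_of_mem_unit_sphere ⟨x, hx⟩), fun h x hx => ?_⟩
    have hx' : ‖x‖⁻¹ • x ∈ Metric.sphere (0 : κ → ℝ) 1 := by
      simp [norm_smul, hx]
    have hpos := h _ hx'
    simp only [star_trivial, mulVec_smul, dotProduct_smul, smul_dotProduct, smul_eq_mul] at hpos
    exact (mul_pos_iff_of_pos_left (by positivity)).mp
      ((mul_pos_iff_of_pos_left (by positivity)).mp hpos)
  rw [hsphere, isOpen_iff_mem_nhds]
  intro M hM
  -- positivity on the compact unit sphere persists near `M` (tube lemma)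
  refine (isCompact_sphere 0 1).eventually_forall_of_forall_eventually fun x hx => ?_
  have hcont : Continuous fun z : Matrix κ κ ℝ × (κ → ℝ) => star z.2 ⬝ᵥ z.1 *ᵥ z.2 := by
    fun_prop
  exact continuousAt_const.eventually_lt hcont.continuousAt (hM x hx)

end PosDef

section Real

variable {ι : Type*} [Fintype ι] [LinearOrder ι] [DecidableEq ι] (p : ℕ)

theorem IsHermitian.exists_unitary_addCompound_eq {A : Matrix ι ι ℝ} (hA : A.IsHermitian) :
    ∃ Q ∈ unitaryGroup (Set.powersetCard ι p) ℝ, addCompound p A =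
      Q * diagonal (fun s : Set.powersetCard ι p => ∑ i ∈ (s : Finset ι), hA.eigenvalues i) *
        star Q := by
  set U : Matrix ι ι ℝ := (hA.eigenvectorUnitary : Matrix ι ι ℝ)
  have hU : U * star U = 1 := Unitary.coe_mul_star_self _
  have hstar : star (compound p U) = compound p (star U) := by
    simp only [star_eq_conjTranspose, conjTranspose_eq_transpose_of_trivial, compound_transpose]
  refine ⟨compound p U,
    mem_unitaryGroup_iff.mpr (by rw [hstar, ← compound_mul, hU, compound_one]), ?_⟩
  conv_lhs => rw [hA.spectral_theorem, Unitary.conjStarAlgAut_apply]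
  rw [addCompound_mul_mul p hU, hstar, RCLike.ofReal_real_eq_id, Function.id_comp,
    addCompound_diagonal]

theorem IsHermitian.det_addCompound {A : Matrix ι ι ℝ} (hA : A.IsHermitian) :
    det (addCompound p A) =
      ∏ s : Set.powersetCard ι p, ∑ i ∈ (s : Finset ι), hA.eigenvalues i := by
  obtain ⟨Q, hQ, h⟩ := hA.exists_unitary_addCompound_eq p
  rw [h, det_mul, det_mul, mul_comm, ← mul_assoc, ← det_mul, Unitary.star_mul_self_of_mem hQ,
    det_one, one_mul, det_diagonal]

theorem IsHermitian.posDef_addCompound_iff {A : Matrix ι ι ℝ} (hA : A.IsHermitian) :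
    (addCompound p A).PosDef ↔
      ∀ s : Set.powersetCard ι p, 0 < ∑ i ∈ (s : Finset ι), hA.eigenvalues i := by
  obtain ⟨Q, hQ, h⟩ := hA.exists_unitary_addCompound_eq p
  rw [h, IsUnit.posDef_star_right_conjugate_iff (Unitary.isUnit_coe (U := ⟨Q, hQ⟩)),
    posDef_diagonal_iff]

theorem IsHermitian.isHermitian_addCompound {A : Matrix ι ι ℝ} (hA : A.IsHermitian) :
    (addCompound p A).IsHermitian := by
  rw [IsHermitian, conjTranspose_eq_transpose_of_trivial, ← addCompound_transpose,
    ← conjTranspose_eq_transpose_of_trivial, hA]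

end Real

end Matrix

theorem mem_PconeMat_iff {n p : ℕ} {A : Matrix (Fin n) (Fin n) ℝ} :
    A ∈ PconeMat n p ↔ A.IsHermitian ∧ (addCompound p A).PosDef :=
  ⟨fun ⟨hA, hP⟩ => ⟨hA, (hA.posDef_addCompound_iff p).mpr fun s =>
      hP s (Set.powersetCard.card_eq s)⟩,
    fun ⟨hA, hP⟩ => ⟨hA, fun S hS => (hA.posDef_addCompound_iff p).mp hP
      (⟨S, Set.powersetCard.mem_iff.mpr hS⟩ : Set.powersetCard (Fin n) p)⟩⟩

theorem FpnMat_eq_det_addCompound {n p : ℕ} {A : Matrix (Fin n) (Fin n) ℝ}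
    (hA : A.IsHermitian) :
    FpnMat n p A = det (addCompound p A) ^ (Fintype.card (Set.powersetCard (Fin n) p) : ℝ)⁻¹ := by
  have hprod : ∏ S ∈ univ.powersetCard p, ∑ i ∈ S, hA.eigenvalues i =
      ∏ s : Set.powersetCard (Fin n) p, ∑ i ∈ (s : Finset (Fin n)), hA.eigenvalues i :=
    Finset.prod_subtype _
      (fun S => by rw [Finset.mem_powersetCard_univ, Set.powersetCard.mem_iff])
      fun S => ∑ i ∈ S, hA.eigenvalues i
  rw [FpnMat, dif_pos hA, hA.det_addCompound, hprod, Fintype.card_eq_nat_card,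
    Set.powersetCard.card, Nat.card_eq_fintype_card, Fintype.card_fin]

theorem PconeMat_open_convex_cone_Fpn_concave_general (n p : ℕ)
    (hpn : p ≤ n) :
    (∃ U : Set (Matrix (Fin n) (Fin n) ℝ), IsOpen U ∧
      PconeMat n p = U ∩ {A | A.IsHermitian}) ∧
    Convex ℝ (PconeMat n p) ∧
    (∀ t : ℝ, 0 < t → ∀ A ∈ PconeMat n p, t • A ∈ PconeMat n p) ∧
    (∀ A ∈ PconeMat n p, ∀ B ∈ PconeMat n p, ∀ t : ℝ, 0 ≤ t → t ≤ 1 →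
      t * FpnMat n p A + (1 - t) * FpnMat n p B ≤ FpnMat n p (t • A + (1 - t) • B)) := by
  set D := addCompound (R := ℝ) (ι := Fin n) p
  have : Nonempty (Set.powersetCard (Fin n) p) := by
    rw [← Fintype.card_pos_iff, Fintype.card_eq_nat_card, Set.powersetCard.card,
      Nat.card_eq_fintype_card, Fintype.card_fin]
    exact Nat.choose_pos hpn
  have hconcave : ConcaveOn ℝ (PconeMat n p) (FpnMat n p) := by
    rw [show PconeMat n p = {A | A.IsHermitian} ∩ D ⁻¹' {M | M.PosDef} from
      Set.ext fun _ => mem_PconeMat_iff]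
    refine ((concaveOn_det_rpow.comp_linearMap D).subset Set.inter_subset_right
      (convex_setOf_isHermitian.inter (convex_setOf_posDef.linear_preimage D))).congr ?_
    exact fun A hA => (FpnMat_eq_det_addCompound hA.1).symm
  refine ⟨⟨D ⁻¹' {M | ∀ x ≠ 0, 0 < star x ⬝ᵥ M *ᵥ x},
    isOpen_setOf_forall_dotProduct_mulVec_pos.preimage D.continuous_of_finiteDimensional, ?_⟩,
    hconcave.1, fun t ht A hA => ?_,
    fun A hA B hB t ht0 ht1 => hconcave.2 hA hB ht0 (sub_nonneg.2 ht1) (add_sub_cancel t 1)⟩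
  · ext A
    rw [mem_PconeMat_iff, Set.mem_inter_iff, Set.mem_preimage, Set.mem_ofPred_eq,
      Set.mem_ofPred_eq, posDef_iff_dotProduct_mulVec]
    exact ⟨fun ⟨hA, _, hpos⟩ => ⟨hpos, hA⟩,
      fun ⟨hpos, hA⟩ => ⟨hA, hA.isHermitian_addCompound p, hpos⟩⟩
  · obtain ⟨hA, hP⟩ := mem_PconeMat_iff.mp hA
    exact mem_PconeMat_iff.mpr
      ⟨hA.smul (IsSelfAdjoint.all t), (map_smul D t A).symm ▸ hP.smul ht⟩

/-- `P_p` is an open convex cone in the space of real symmetric `n × n`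
matrices — open in the subspace of symmetric matrices, convex and closed under positive
scalar multiplication — and `A ↦ F(λ(A))` is concave on `P_p`. -/
theorem PconeMat_open_convex_cone_Fpn_concave (n p : ℕ) (hn : 2 ≤ n) (hp1 : 1 ≤ p)
    (hpn : p ≤ n) :
    (∃ U : Set (Matrix (Fin n) (Fin n) ℝ), IsOpen U ∧
      PconeMat n p = U ∩ {A | A.IsHermitian}) ∧
    Convex ℝ (PconeMat n p) ∧
    (∀ t : ℝ, 0 < t → ∀ A ∈ PconeMat n p, t • A ∈ PconeMat n p) ∧
    (∀ A ∈ PconeMat n p, ∀ B ∈ PconeMat n p, ∀ t : ℝ, 0 ≤ t → t ≤ 1 →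
      t * FpnMat n p A + (1 - t) * FpnMat n p B ≤ FpnMat n p (t • A + (1 - t) • B)) :=
  PconeMat_open_convex_cone_Fpn_concave_general n p hpn
end
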